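/- arXiv:2601.14195 — 2 statements merged into one kernel-verified Lean document; each statement's English description precedes it below -/
import Mathlib

section
/- For every positive integer k there exists an SRI instance with 3^k agents and complete preference lists (every agent ranks all other agents) such that the minimum over all matchings M of the maximum over agents a of |bp_a(M)| equals exactly k. -/
/-- A Stable Roommates (SRI) instance: a set of agents, symmetric irreflexive
acceptability, and for each agent a strict (transitive, total, irreflexive)
preference order over its acceptable partners. -/
structure SRI (A : Type) where
  acc : A → A → Prop
  acc_symm : ∀ a b, acc a b → acc b a
  acc_irrefl : ∀ a, ¬ acc a a
  /-- `pref a b c` : agent `a` strictly prefers `b` to `c`. -/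
  pref : A → A → A → Prop
  pref_acc : ∀ a b c, pref a b c → acc a b ∧ acc a c
  pref_trans : ∀ a b c d, pref a b c → pref a c d → pref a b d
  pref_irrefl : ∀ a b, ¬ pref a b b
  pref_total : ∀ a b c, acc a b → acc a c → b ≠ c → pref a b c ∨ pref a c b

/-- A matching, encoded as an involution: `m a = a` means `a` is unmatched. -/
structure Matching {A : Type} (I : SRI A) where
  m : A → A
  invol : ∀ a, m (m a) = a
  acc_matched : ∀ a, m a ≠ a → I.acc a (m a)

/-- `{a, b}` is a blocking pair: mutually acceptable, and each is unmatched or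
prefers the other to its current partner. -/
def blocks {A : Type} (I : SRI A) (M : Matching I) (a b : A) : Prop :=
  I.acc a b ∧ (M.m a = a ∨ I.pref a b (M.m a)) ∧ (M.m b = b ∨ I.pref b a (M.m b))

/-- Number of blocking pairs containing agent `a`. -/
noncomputable def bpa {A : Type} (I : SRI A) (M : Matching I) (a : A) : ℕ :=
  {b | blocks I M a b}.ncard

/-- Maximum over agents of the number of blocking pairs containing that agent. -/
noncomputable def maxBP {A : Type} (I : SRI A) (M : Matching I) : ℕ :=
  sSup (Set.range fun a => bpa I M a)

/-- Total number of (unordered) blocking pairs. -/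
noncomputable def totalBP {A : Type} (I : SRI A) (M : Matching I) : ℕ :=
  {p : Sym2 A | ∃ a b, p = s(a, b) ∧ blocks I M a b}.ncard

/-- Number of agents contained in at least one blocking pair. -/
noncomputable def blockAgents {A : Type} (I : SRI A) (M : Matching I) : ℕ :=
  {a | ∃ b, blocks I M a b}.ncard

/-- Number of matched agents (twice the number of pairs). -/
noncomputable def msize {A : Type} (I : SRI A) (M : Matching I) : ℕ :=
  {a | M.m a ≠ a}.ncard

/-- `M` is a maximum-cardinality matching. -/
def MaxCard {A : Type} (I : SRI A) (M : Matching I) : Prop :=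
  ∀ M' : Matching I, msize I M' ≤ msize I M

/-- The instance is bipartite with respect to the two sides given by `side`. -/
def Bip {A : Type} (I : SRI A) (side : A → Bool) : Prop :=
  ∀ a b, I.acc a b → side a ≠ side b

/-- `M` is stable: no blocking pair. -/
def Stable {A : Type} (I : SRI A) (M : Matching I) : Prop :=
  ∀ a b, ¬ blocks I M a b

/-!
Split the `3 ^ (k + 1)` agents into three blocks `0, 1, 2` of `3 ^ k` agents, each a copy of
the level-`k` instance. An agent of block `i` ranks its own block first (as in the level-`k`
instance), then block `i + 1`, then block `i + 2`, each outer block ordered by position.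

Lower bound. As the number of agents is odd, every matching leaves an agent `u` unmatched, and
by induction `u` lies in at least `k - 1 + ⌈|U| / 2⌉` blocking pairs, `U` being the set of
unmatched agents. Restricting the matching to the block `i` of `u` (agents matched outside become
unmatched) gives the blocking pairs inside the block. Outside it, `u` blocks with every unmatched
agent and with every agent of block `i + 2` matched into block `i + 1`. If there are none, parity
forces blocks `i + 1` and `i + 2` each to send an agent into block `i`, which raises the number
of unmatched agents of the restriction by two.

Upper bound. Match each block recursively, leaving its last agent single, and pair the last
agents of blocks `0` and `1`. The only blocking pair across blocks is then formed by the last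
agents of blocks `1` and `2`.
-/

def SRI.ofRank {A : Type} (r : A → A → ℕ) (hr : ∀ a, Function.Injective (r a)) : SRI A where
  acc a b := a ≠ b
  acc_symm _ _ h := h.symm
  acc_irrefl _ h := h rfl
  pref a b c := a ≠ b ∧ a ≠ c ∧ r a b < r a c
  pref_acc _ _ _ h := ⟨h.1, h.2.1⟩
  pref_trans _ _ _ _ h₁ h₂ := ⟨h₁.1, h₂.2.1, h₁.2.2.trans h₂.2.2⟩
  pref_irrefl _ _ h := lt_irrefl _ h.2.2
  pref_total a _ _ hab hac hbc :=
    ((hr a).ne hbc).lt_or_gt.imp (fun h => ⟨hab, hac, h⟩) (fun h => ⟨hac, hab, h⟩)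

def Desires {A : Type} (r : A → A → ℕ) (m : A → A) (a b : A) : Prop :=
  m a = a ∨ r a b < r a (m a)

lemma blocks_ofRank_iff {A : Type} {r : A → A → ℕ} {hr : ∀ a, Function.Injective (r a)}
    (M : Matching (SRI.ofRank r hr)) (a b : A) :
    blocks (SRI.ofRank r hr) M a b ↔ a ≠ b ∧ Desires r M.m a b ∧ Desires r M.m b a := by
  have key : ∀ x y, x ≠ y →
      ((M.m x = x ∨ (SRI.ofRank r hr).pref x y (M.m x)) ↔ Desires r M.m x y) := by
    intro x y hxy
    by_cases hx : M.m x = x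
    · simp [Desires, hx]
    · simp [Desires, SRI.ofRank, hx, hxy, Ne.symm hx]
  exact ⟨fun ⟨h, ha, hb⟩ => ⟨h, (key a b h).1 ha, (key b a (Ne.symm h)).1 hb⟩,
    fun ⟨h, ha, hb⟩ => ⟨h, (key a b h).2 ha, (key b a (Ne.symm h)).2 hb⟩⟩

lemma Matching.odd_ncard_unmatched {A : Type} [Fintype A] {I : SRI A} (M : Matching I)
    (hA : Odd (Fintype.card A)) : Odd {a | M.m a = a}.ncard := by
  classical
  let f : Function.End A := M.m
  have hf : f ^ 2 ^ 1 = 1 := funext M.invol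
  have hmod := Equiv.Perm.card_fixedPoints_modEq (p := 2) (hp := ⟨Nat.prime_two⟩) hf
  rw [Nat.odd_iff, ← Nat.odd_iff.1 hA, ← Nat.card_coe_set_eq, Nat.card_eq_fintype_card]
  exact hmod.symm

lemma ncard_add_ncard_add_ncard_le {α : Type} [Finite α] {s t u v : Set α} (hst : Disjoint s t)
    (hsu : Disjoint s u) (htu : Disjoint t u) (h : s ∪ t ∪ u ⊆ v) :
    s.ncard + t.ncard + u.ncard ≤ v.ncard := by
  rw [← Set.ncard_union_eq hst, ← Set.ncard_union_eq (Disjoint.union_left hsu htu)]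
  exact Set.ncard_le_ncard h

lemma bpa_le_maxBP {A : Type} [Finite A] (I : SRI A) (M : Matching I) (a : A) :
    bpa I M a ≤ maxBP I M :=
  le_csSup (Set.finite_range _).bddAbove ⟨a, rfl⟩

lemma maxBP_le {A : Type} {I : SRI A} {M : Matching I} {n : ℕ} (h : ∀ a, bpa I M a ≤ n) :
    maxBP I M ≤ n :=
  csSup_le' (by rintro _ ⟨a, rfl⟩; exact h a)

lemma Matching.ext {A : Type} {I : SRI A} {M N : Matching I} (h : M.m = N.m) : M = N := by
  cases M; cases N; simpa using h

namespace Ternary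

variable {k : ℕ}

def emb (i : Fin 3) (x : Fin (3 ^ k)) : Fin (3 ^ (k + 1)) :=
  ⟨i * 3 ^ k + x, by
    have := Nat.mul_le_mul_right (3 ^ k) (Nat.le_of_lt_succ i.isLt)
    rw [pow_succ]; omega⟩

def grp (a : Fin (3 ^ (k + 1))) : Fin 3 :=
  ⟨a / 3 ^ k, Nat.div_lt_of_lt_mul (by rw [← pow_succ]; exact a.isLt)⟩

def res (a : Fin (3 ^ (k + 1))) : Fin (3 ^ k) :=
  ⟨a % 3 ^ k, Nat.mod_lt _ (by positivity)⟩

@[simp] lemma grp_emb (i : Fin 3) (x : Fin (3 ^ k)) : grp (emb i x) = i := by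
  ext
  simp only [grp, emb]
  rw [add_comm, Nat.add_mul_div_right _ _ (by positivity), Nat.div_eq_of_lt x.isLt, zero_add]

@[simp] lemma res_emb (i : Fin 3) (x : Fin (3 ^ k)) : res (emb i x) = x := by
  ext; simp [res, emb, Nat.mod_eq_of_lt x.isLt]

@[simp] lemma emb_grp_res (a : Fin (3 ^ (k + 1))) : emb (grp a) (res a) = a := by
  ext; simp [emb, grp, res, Nat.div_add_mod']

lemma exists_eq_emb (a : Fin (3 ^ (k + 1))) : ∃ i x, a = emb i x :=
  ⟨_, _, (emb_grp_res a).symm⟩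

@[simp] lemma emb_inj {i j : Fin 3} {x y : Fin (3 ^ k)} :
    emb i x = emb j y ↔ i = j ∧ x = y := by
  refine ⟨fun h => ⟨by simpa using congrArg grp h, by simpa using congrArg res h⟩, ?_⟩
  rintro ⟨rfl, rfl⟩; rfl

lemma emb_injective (i : Fin 3) : Function.Injective (emb (k := k) i) :=
  fun _ _ h => (emb_inj.1 h).2

lemma val_sub_self_lt_val_sub {i j : Fin 3} (h : j ≠ i) : (i - i).val < (j - i).val := by
  simpa [Fin.pos_iff_ne_zero', sub_eq_zero] using h

lemma val_sub_add_two_lt (i : Fin 3) : (i - (i + 2)).val < (i + 1 - (i + 2)).val := by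
  rw [sub_add_cancel_left, add_sub_add_left_eq_sub]; decide

lemma eq_of_ne_add_one_of_ne_add_two {c i : Fin 3} (h₁ : c ≠ i + 1) (h₂ : c ≠ i + 2) :
    c = i := by
  revert c i; decide

lemma eq_neg_of_ne_zero_of_ne {i j : Fin 3} (hi : i ≠ 0) (hj : j ≠ 0) (hij : i ≠ j) :
    j = -i := by
  revert i j; decide

def rank : (k : ℕ) → Fin (3 ^ k) → Fin (3 ^ k) → ℕ
  | 0, _, _ => 0
  | k + 1, a, b =>
    if grp a = grp b then rank k (res a) (res b) else (grp b - grp a).val * 3 ^ k + res b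

lemma rank_emb (i j : Fin 3) (x y : Fin (3 ^ k)) :
    rank (k + 1) (emb i x) (emb j y) = if i = j then rank k x y else (j - i).val * 3 ^ k + y := by
  simp [rank]

lemma rank_lt (a b : Fin (3 ^ k)) : rank k a b < 3 ^ k := by
  induction k with
  | zero => simp [rank]
  | succ k ih =>
    obtain ⟨i, x, rfl⟩ := exists_eq_emb a
    obtain ⟨j, y, rfl⟩ := exists_eq_emb b
    rw [rank_emb, pow_succ]
    have := Nat.mul_le_mul_right (3 ^ k) (Nat.le_of_lt_succ (j - i).isLt)
    split_ifs
    · have := ih x y; omega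
    · omega

lemma rank_emb_lt_rank_emb {i j l : Fin 3} (x y z : Fin (3 ^ k))
    (h : (j - i).val < (l - i).val) :
    rank (k + 1) (emb i x) (emb j y) < rank (k + 1) (emb i x) (emb l z) := by
  have hl : l ≠ i := by rintro rfl; simp at h
  rw [rank_emb, rank_emb, if_neg hl.symm]
  have hmul := Nat.mul_le_mul_right (3 ^ k) (Nat.succ_le_of_lt h)
  rw [Nat.succ_mul] at hmul
  split_ifs
  · have := rank_lt x y; omega
  · have := y.isLt; omega

lemma rank_injective (k : ℕ) (a : Fin (3 ^ k)) : Function.Injective (rank k a) := by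
  induction k with
  | zero => intro b c _; exact Subsingleton.elim (α := Fin 1) b c
  | succ k ih =>
    intro b c hbc
    obtain ⟨i, x, rfl⟩ := exists_eq_emb a
    obtain ⟨j, y, rfl⟩ := exists_eq_emb b
    obtain ⟨l, z, rfl⟩ := exists_eq_emb c
    have hjl : j = l := by
      have : (j - i).val = (l - i).val := by
        by_contra hne
        rcases Nat.lt_or_gt_of_ne hne with h | h
        · exact (rank_emb_lt_rank_emb x y z h).ne hbc
        · exact (rank_emb_lt_rank_emb x z y h).ne hbc.symm
      simpa using Fin.ext this
    subst hjl
    rw [rank_emb, rank_emb] at hbc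
    split_ifs at hbc
    · rw [ih x hbc]
    · rw [Fin.ext (Nat.add_left_cancel hbc)]

def inst (k : ℕ) : SRI (Fin (3 ^ k)) := SRI.ofRank (rank k) (rank_injective k)

lemma blocks_inst_iff (M : Matching (inst k)) (a b : Fin (3 ^ k)) :
    blocks (inst k) M a b ↔ a ≠ b ∧ Desires (rank k) M.m a b ∧ Desires (rank k) M.m b a :=
  blocks_ofRank_iff M a b

def restrict (M : Matching (inst (k + 1))) (i : Fin 3) : Matching (inst k) where
  m x := if grp (M.m (emb i x)) = i then res (M.m (emb i x)) else x
  invol x := by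
    by_cases h : grp (M.m (emb i x)) = i
    · obtain ⟨j, y, hy⟩ := exists_eq_emb (M.m (emb i x))
      rw [hy, grp_emb] at h
      subst h
      have hy' : M.m (emb j y) = emb j x := by rw [← hy, M.invol]
      simp [hy, hy']
    · simp [h]
  acc_matched _ h := Ne.symm h

lemma restrict_m_of_eq_emb {M : Matching (inst (k + 1))} {i : Fin 3} {x y : Fin (3 ^ k)}
    (h : M.m (emb i x) = emb i y) : (restrict M i).m x = y := by
  simp [restrict, h]

lemma restrict_m_of_grp_ne {M : Matching (inst (k + 1))} {i : Fin 3} {x : Fin (3 ^ k)}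
    (h : grp (M.m (emb i x)) ≠ i) : (restrict M i).m x = x := by
  simp [restrict, h]

lemma restrict_m_eq_self_iff (M : Matching (inst (k + 1))) (i : Fin 3) (x : Fin (3 ^ k)) :
    (restrict M i).m x = x ↔ M.m (emb i x) = emb i x ∨ grp (M.m (emb i x)) ≠ i := by
  obtain ⟨j, y, hy⟩ := exists_eq_emb (M.m (emb i x))
  by_cases hj : j = i
  · subst hj; simp [restrict_m_of_eq_emb hy, hy]
  · simp [restrict_m_of_grp_ne (by rwa [hy, grp_emb]), hy, hj]

lemma desires_restrict_iff (M : Matching (inst (k + 1))) (i : Fin 3) (x y : Fin (3 ^ k)) :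
    Desires (rank (k + 1)) M.m (emb i x) (emb i y) ↔ Desires (rank k) (restrict M i).m x y := by
  obtain ⟨j, z, hz⟩ := exists_eq_emb (M.m (emb i x))
  by_cases hj : j = i
  · subst hj; simp [Desires, restrict_m_of_eq_emb hz, hz, rank_emb]
  · have hout : rank (k + 1) (emb i x) (emb i y) < rank (k + 1) (emb i x) (M.m (emb i x)) := by
      rw [hz]; exact rank_emb_lt_rank_emb x y z (val_sub_self_lt_val_sub hj)
    simp [Desires, restrict_m_of_grp_ne (by rwa [hz, grp_emb]), hout]

lemma blocks_emb_iff (M : Matching (inst (k + 1))) (i : Fin 3) (x y : Fin (3 ^ k)) :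
    blocks (inst (k + 1)) M (emb i x) (emb i y) ↔ blocks (inst k) (restrict M i) x y := by
  simp only [blocks_inst_iff, desires_restrict_iff, ne_eq, emb_inj, true_and]

lemma odd_ncard_unmatched (M : Matching (inst k)) : Odd {a | M.m a = a}.ncard :=
  M.odd_ncard_unmatched (by simpa using Odd.pow (by decide : Odd 3))

lemma exists_unmatched_or_matched_out (M : Matching (inst (k + 1))) (j : Fin 3) :
    ∃ a, grp a = j ∧ (M.m a = a ∨ grp (M.m a) ≠ j) := by
  obtain ⟨x, hx⟩ := Set.nonempty_of_ncard_ne_zero (odd_ncard_unmatched (restrict M j)).pos.ne'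
  exact ⟨emb j x, grp_emb j x, (restrict_m_eq_self_iff M j x).1 hx⟩

lemma ncard_unmatched_restrict (M : Matching (inst (k + 1))) (i : Fin 3) :
    {x | (restrict M i).m x = x}.ncard =
      {a | grp a = i ∧ M.m a = a}.ncard + {a | grp a = i ∧ grp (M.m a) ≠ i}.ncard := by
  rw [← Set.ncard_union_eq, ← Set.ncard_image_of_injective _ (emb_injective i)]
  · congr 1
    ext a
    obtain ⟨j, y, rfl⟩ := exists_eq_emb a
    by_cases hji : j = i
    · subst hji; simp [restrict_m_eq_self_iff]
    · simp [hji, Ne.symm hji]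
  · exact Set.disjoint_left.2 fun a ha hc => hc.2 (by rw [ha.2, ha.1])

lemma bpa_restrict_add_le_bpa {M : Matching (inst (k + 1))} {i : Fin 3} {x : Fin (3 ^ k)}
    (hx : M.m (emb i x) = emb i x) :
    bpa (inst k) (restrict M i) x + {a | grp a ≠ i ∧ M.m a = a}.ncard
      + {a | grp a = i + 2 ∧ grp (M.m a) = i + 1}.ncard ≤ bpa (inst (k + 1)) M (emb i x) := by
  rw [bpa, ← Set.ncard_image_of_injective _ (emb_injective i)]
  refine ncard_add_ncard_add_ncard_le ?_ ?_ ?_ ?_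
  · refine Set.disjoint_left.2 ?_
    rintro _ ⟨y, -, rfl⟩ ⟨h, -⟩
    exact h (grp_emb i y)
  · refine Set.disjoint_left.2 ?_
    rintro _ ⟨y, -, rfl⟩ ⟨h, -⟩
    exact add_ne_left.2 (by decide : (2 : Fin 3) ≠ 0) (h.symm.trans (grp_emb i y))
  · refine Set.disjoint_left.2 ?_
    rintro a ⟨-, ha⟩ ⟨hg, hmg⟩
    rw [ha, hg] at hmg
    exact (add_right_injective i).ne (by decide) hmg
  · rintro b ((⟨y, hy, rfl⟩ | ⟨hb, hmb⟩) | ⟨hb, hmb⟩)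
    · exact (blocks_emb_iff M i x y).2 hy
    · exact ⟨fun h => hb (by rw [← h, grp_emb]), Or.inl hx, Or.inl hmb⟩
    · refine (blocks_inst_iff M _ _).2 ⟨fun h => ?_, Or.inl hx, Or.inr ?_⟩
      · rw [← h, grp_emb] at hb; exact add_ne_left.2 (by decide) hb.symm
      · obtain ⟨j, y, rfl⟩ := exists_eq_emb b
        obtain ⟨l, z, hz⟩ := exists_eq_emb (M.m (emb j y))
        rw [grp_emb] at hb
        rw [hz, grp_emb] at hmb
        subst hb hmb
        rw [hz]
        exact rank_emb_lt_rank_emb y x z (val_sub_add_two_lt i)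

lemma two_le_ncard_matched_out {M : Matching (inst (k + 1))} {i : Fin 3}
    (h₂ : ∀ a, grp a ≠ i → M.m a ≠ a)
    (h₃ : ∀ a, grp a = i + 2 → grp (M.m a) ≠ i + 1) :
    2 ≤ {a | grp a = i ∧ grp (M.m a) ≠ i}.ncard := by
  obtain ⟨y, hy, hMy⟩ := exists_unmatched_or_matched_out M (i + 1)
  replace hMy := hMy.resolve_left (h₂ y (by rw [hy]; exact add_ne_left.2 (by decide)))
  have hMy' : grp (M.m y) = i :=
    eq_of_ne_add_one_of_ne_add_two (hy ▸ hMy) fun h => h₃ _ h (by rw [M.invol, hy])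
  obtain ⟨z, hz, hMz⟩ := exists_unmatched_or_matched_out M (i + 2)
  replace hMz := hMz.resolve_left (h₂ z (by rw [hz]; exact add_ne_left.2 (by decide)))
  have hMz' : grp (M.m z) = i := eq_of_ne_add_one_of_ne_add_two (h₃ z hz) (hz ▸ hMz)
  have hyz : M.m y ≠ M.m z := fun h => by
    have := congrArg grp (by simpa [M.invol] using congrArg M.m h : y = z)
    rw [hy, hz] at this
    exact (add_right_injective i).ne (by decide) this
  calc 2 = ({M.m y, M.m z} : Set _).ncard := (Set.ncard_pair hyz).symm
    _ ≤ _ := Set.ncard_le_ncard (by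
      rintro _ (rfl | rfl)
      · exact ⟨hMy', by rw [M.invol, hy]; exact add_ne_left.2 (by decide)⟩
      · exact ⟨hMz', by rw [M.invol, hz]; exact add_ne_left.2 (by decide)⟩)

lemma le_bpa_add_one_of_unmatched (k : ℕ) (M : Matching (inst k)) (u : Fin (3 ^ k))
    (hu : M.m u = u) : k + ({a | M.m a = a}.ncard + 1) / 2 ≤ bpa (inst k) M u + 1 := by
  induction k with
  | zero =>
    have := Set.ncard_le_card {a | M.m a = a}
    simp only [pow_zero, Nat.card_eq_fintype_card, Fintype.card_fin] at this
    omega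
  | succ k ih =>
    obtain ⟨i, x, rfl⟩ := exists_eq_emb u
    have hIH := ih (restrict M i) x ((restrict_m_eq_self_iff M i x).2 (Or.inl hu))
    have hodd := Nat.odd_iff.1 (odd_ncard_unmatched (restrict M i))
    rw [ncard_unmatched_restrict] at hIH hodd
    have hcount := bpa_restrict_add_le_bpa hu
    have hU : {a | M.m a = a}.ncard =
        {a | grp a = i ∧ M.m a = a}.ncard + {a | grp a ≠ i ∧ M.m a = a}.ncard := by
      rw [← Set.ncard_union_eq (Set.disjoint_left.2 fun a h₁ h₂ => h₂.1 h₁.1)]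
      congr 1
      ext a
      simp only [Set.mem_ofPred_eq, Set.mem_union]
      tauto
    have hcases : {a | grp a ≠ i ∧ M.m a = a}.ncard ≠ 0 ∨
        {a | grp a = i + 2 ∧ grp (M.m a) = i + 1}.ncard ≠ 0 ∨
        2 ≤ {a | grp a = i ∧ grp (M.m a) ≠ i}.ncard := by
      by_contra! h
      obtain ⟨h₂, h₃, hC⟩ := h
      rw [Set.ncard_eq_zero] at h₂ h₃
      exact (two_le_ncard_matched_out (fun a ha hma => h₂.subset ⟨ha, hma⟩)
        (fun a ha hma => h₃.subset ⟨ha, hma⟩)).not_gt hC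
    omega

lemma le_maxBP (M : Matching (inst k)) : k ≤ maxBP (inst k) M := by
  have hU := (odd_ncard_unmatched M).pos
  obtain ⟨u, hu⟩ := Set.nonempty_of_ncard_ne_zero hU.ne'
  have := le_bpa_add_one_of_unmatched k M u hu
  exact le_trans (by omega) (bpa_le_maxBP _ M u)

def top (k : ℕ) : Fin (3 ^ k) := ⟨3 ^ k - 1, Nat.sub_lt (by positivity) one_pos⟩

lemma top_succ (k : ℕ) : top (k + 1) = emb 2 (top k) := by
  have : 0 < 3 ^ k := by positivity
  ext; simp [top, emb, pow_succ]; omega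

def starPartner : (k : ℕ) → Fin (3 ^ k) → Fin (3 ^ k)
  | 0, a => a
  | k + 1, a =>
    if res a = top k then emb (Equiv.swap 0 1 (grp a)) (res a)
    else emb (grp a) (starPartner k (res a))

lemma starPartner_emb (i : Fin 3) (x : Fin (3 ^ k)) :
    starPartner (k + 1) (emb i x) =
      if x = top k then emb (Equiv.swap 0 1 i) x else emb i (starPartner k x) := by
  simp [starPartner]

lemma starPartner_eq_self_iff (a : Fin (3 ^ k)) : starPartner k a = a ↔ a = top k := by
  induction k with
  | zero => exact iff_of_true rfl (Subsingleton.elim (α := Fin 1) _ _)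
  | succ k ih =>
    obtain ⟨i, x, rfl⟩ := exists_eq_emb a
    rw [starPartner_emb, top_succ]
    split_ifs with hx
    · subst hx; simp only [emb_inj, and_true]; revert i; decide
    · simp [ih, hx]

lemma starPartner_starPartner (a : Fin (3 ^ k)) : starPartner k (starPartner k a) = a := by
  induction k with
  | zero => rfl
  | succ k ih =>
    obtain ⟨i, x, rfl⟩ := exists_eq_emb a
    by_cases hx : x = top k
    · simp [starPartner_emb, hx]
    · have hx' : starPartner k x ≠ top k := fun h => hx (by
        rw [← ih x, h, (starPartner_eq_self_iff _).2 rfl])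
      simp [starPartner_emb, hx, hx', ih]

def mstar (k : ℕ) : Matching (inst k) where
  m := starPartner k
  invol := starPartner_starPartner
  acc_matched _ h := Ne.symm h

lemma restrict_mstar (i : Fin 3) : restrict (mstar (k + 1)) i = mstar k := by
  refine Matching.ext (funext fun x => ?_)
  by_cases hx : x = top k
  · subst hx
    rw [show (mstar k).m (top k) = top k from (starPartner_eq_self_iff _).2 rfl]
    by_cases hi : i = 2
    · subst hi; exact restrict_m_of_eq_emb (by simp [mstar, starPartner_emb]; rfl)
    · exact restrict_m_of_grp_ne (by simp [mstar, starPartner_emb]; revert i; decide)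
  · exact restrict_m_of_eq_emb (by simp [mstar, starPartner_emb, hx])

lemma res_eq_top_of_desires_mstar {a b : Fin (3 ^ (k + 1))}
    (h : Desires (rank (k + 1)) (mstar (k + 1)).m a b) (hab : grp a ≠ grp b) : res a = top k := by
  obtain ⟨i, x, rfl⟩ := exists_eq_emb a
  obtain ⟨j, y, rfl⟩ := exists_eq_emb b
  by_contra hx
  rw [res_emb] at hx
  have hm : (mstar (k + 1)).m (emb i x) = emb i (starPartner k x) := by
    simp [mstar, starPartner_emb, hx]
  rw [Desires, hm, emb_inj, starPartner_eq_self_iff] at h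
  refine h.elim (fun h => hx h.2) (lt_asymm ?_)
  exact rank_emb_lt_rank_emb _ _ _ (val_sub_self_lt_val_sub (by simpa [eq_comm] using hab))

lemma grp_ne_zero_of_desires_mstar {a b : Fin (3 ^ (k + 1))}
    (h : Desires (rank (k + 1)) (mstar (k + 1)).m a b) (hab : grp a ≠ grp b)
    (hb : res b = top k) : grp a ≠ 0 := by
  have ha := res_eq_top_of_desires_mstar h hab
  obtain ⟨i, x, rfl⟩ := exists_eq_emb a
  obtain ⟨j, y, rfl⟩ := exists_eq_emb b
  simp only [grp_emb, res_emb] at ha hb hab ⊢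
  subst ha hb
  rintro rfl
  have hm : (mstar (k + 1)).m (emb 0 (top k)) = emb 1 (top k) := by
    simp [mstar, starPartner_emb]
  rw [Desires, hm] at h
  obtain rfl | rfl : j = 1 ∨ j = 2 := by clear h; revert j; decide
  · simp at h
  · exact h.elim (by simp) (lt_asymm (rank_emb_lt_rank_emb _ _ _ (by decide)))

lemma eq_of_blocks_mstar_of_grp_ne {a b : Fin (3 ^ (k + 1))}
    (h : blocks (inst (k + 1)) (mstar (k + 1)) a b) (hab : grp a ≠ grp b) :
    b = emb (-grp a) (top k) := by
  obtain ⟨-, hba, hab'⟩ := (blocks_inst_iff _ a b).1 h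
  have ha := res_eq_top_of_desires_mstar hba hab
  have hb := res_eq_top_of_desires_mstar hab' (Ne.symm hab)
  rw [← emb_grp_res b, hb, eq_neg_of_ne_zero_of_ne (grp_ne_zero_of_desires_mstar hba hab hb)
    (grp_ne_zero_of_desires_mstar hab' (Ne.symm hab) ha) hab]

lemma bpa_mstar_le (k : ℕ) (a : Fin (3 ^ k)) : bpa (inst k) (mstar k) a ≤ k := by
  induction k with
  | zero =>
    refine ((Set.ncard_eq_zero).2 (Set.eq_empty_of_forall_notMem fun b h => ?_)).le
    exact h.1 (Subsingleton.elim (α := Fin 1) _ _)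
  | succ k ih =>
    obtain ⟨i, x, rfl⟩ := exists_eq_emb a
    have hsub : {b | blocks (inst (k + 1)) (mstar (k + 1)) (emb i x) b} ⊆
        emb i '' {y | blocks (inst k) (mstar k) x y} ∪ {emb (-i) (top k)} := by
      intro b hb
      obtain ⟨j, y, rfl⟩ := exists_eq_emb b
      by_cases hj : i = j
      · subst hj
        refine Or.inl ⟨y, ?_, rfl⟩
        rwa [Set.mem_ofPred_eq, ← restrict_mstar i, ← blocks_emb_iff]
      · exact Or.inr (by simpa using eq_of_blocks_mstar_of_grp_ne hb (by simpa using hj))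
    calc bpa (inst (k + 1)) (mstar (k + 1)) (emb i x)
        ≤ (emb i '' {y | blocks (inst k) (mstar k) x y}).ncard + 1 :=
          (Set.ncard_le_ncard hsub).trans (Set.ncard_union_le _ _) |>.trans (by simp)
      _ ≤ k + 1 := by
          rw [Set.ncard_image_of_injective _ (emb_injective i)]
          exact Nat.succ_le_succ (ih x)

end Ternary

theorem stmt5_general (k : ℕ) :
    ∃ I : SRI (Fin (3 ^ k)),
      (∀ a b, a ≠ b → I.acc a b) ∧
      (∀ M : Matching I, k ≤ maxBP I M) ∧
      (∃ M : Matching I, maxBP I M = k) :=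
  ⟨Ternary.inst k, fun _ _ h => h, Ternary.le_maxBP, Ternary.mstar k,
    (maxBP_le (Ternary.bpa_mstar_le k)).antisymm (Ternary.le_maxBP _)⟩

/-- For every positive integer k there is an SRI instance with 3^k agents and
complete preference lists whose minimax number of blocking pairs per agent is
exactly k. -/
theorem stmt5 (k : ℕ) (hk : 0 < k) :
    ∃ I : SRI (Fin (3 ^ k)),
      (∀ a b, a ≠ b → I.acc a b) ∧
      (∀ M : Matching I, k ≤ maxBP I M) ∧
      (∃ M : Matching I, maxBP I M = k) :=
  stmt5_general k
end

section
/- Let I be an SMI (bipartite) instance in which all preference lists have length at most 2. Then there exists a maximum-cardinality matching M of I such that no agent is contained in more than one blocking pair. -/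
/-!
Among the maximum-cardinality matchings choose one with the fewest blocking pairs. If an agent
`a` were in two blocking pairs `{a, b}` and `{a, c}`, with `a` preferring `b`, then `a` (whose
list is exactly `b, c`) is single and, by maximality, `b` is matched, to `b'` say. Matching `a`
with `b` and leaving `b'` single keeps the cardinality, and afterwards neither `a` nor `b` lies in
a blocking pair while `b'` lies in at most one (its list has only one entry besides `b`): the two
pairs through `a` are traded for at most one new pair, contradicting minimality.
-/

open scoped Classical

variable {A : Type} {I : SRI A}

namespace SRI

theorem ne_of_acc {a b : A} (h : I.acc a b) : a ≠ b := by
  rintro rfl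
  exact I.acc_irrefl a h

theorem pref_asymm {a b c : A} (h : I.pref a b c) : ¬ I.pref a c b :=
  fun h' => I.pref_irrefl a b (I.pref_trans a b c b h h')

theorem eq_or_eq_of_acc [Finite A] {a b c d : A} (hdeg : {x | I.acc a x}.ncard ≤ 2)
    (hb : I.acc a b) (hc : I.acc a c) (hd : I.acc a d) (hbc : b ≠ c) : d = b ∨ d = c := by
  by_contra! h
  have hsub : ({d, b, c} : Set A) ⊆ {x | I.acc a x} := by
    rintro x (rfl | rfl | rfl) <;> assumption
  have := Set.ncard_le_ncard hsub (Set.toFinite _)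
  rw [Set.ncard_insert_of_notMem (by simp [h.1, h.2]) (Set.toFinite _), Set.ncard_pair hbc]
    at this
  omega

theorem not_pref_of_pref [Finite A] {a b c : A} (hdeg : {x | I.acc a x}.ncard ≤ 2)
    (h : I.pref a b c) (w : A) : ¬ I.pref a w b := by
  intro hw
  obtain ⟨hab, hac⟩ := I.pref_acc a b c h
  rcases I.eq_or_eq_of_acc hdeg hab hac (I.pref_acc a w b hw).1
    (fun hbc => I.pref_irrefl a b (hbc ▸ h)) with rfl | rfl
  · exact I.pref_irrefl a w hw
  · exact I.pref_asymm h hw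

end SRI

namespace Matching

theorem m_injective : Function.Injective (Matching.m : Matching I → A → A) := by
  rintro ⟨m, _, _⟩ ⟨m', _, _⟩ (rfl : m = m')
  rfl

instance [Finite A] : Finite (Matching I) := Finite.of_injective _ m_injective

instance : Inhabited (Matching I) := ⟨⟨id, fun _ => rfl, fun _ h => absurd rfl h⟩⟩

/-- `a` takes `b` as partner and `b`'s former partner is left single. -/
noncomputable def rematch (M : Matching I) (a b : A) (ha : M.m a = a) (hab : I.acc a b) :
    Matching I where
  m x := if x = a then b else if x = b then a else if x = M.m b then x else M.m x
  invol x := by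
    have := I.ne_of_acc hab
    have := M.invol x
    have := M.invol b
    split_ifs <;> grind
  acc_matched x hx := by
    split_ifs at hx ⊢ with h₁ h₂ h₃
    · exact h₁ ▸ hab
    · exact h₂ ▸ I.acc_symm a b hab
    · exact absurd rfl hx
    · exact M.acc_matched x hx

section rematch

variable (M : Matching I) {a b : A} (ha : M.m a = a) (hab : I.acc a b)
include ha hab

@[simp] theorem rematch_m_left : (M.rematch a b ha hab).m a = b := if_pos rfl

@[simp] theorem rematch_m_right : (M.rematch a b ha hab).m b = a := by
  simp [rematch, (I.ne_of_acc hab).symm]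

theorem rematch_m_of_ne {x : A} (hxa : x ≠ a) (hxb : x ≠ b) (hxb' : x ≠ M.m b) :
    (M.rematch a b ha hab).m x = M.m x := by
  simp [rematch, hxa, hxb, hxb']

theorem matched_rematch : {x | (M.rematch a b ha hab).m x ≠ x} =
    insert a (insert b ({x | M.m x ≠ x} \ {M.m b})) := by
  ext x
  have := I.ne_of_acc hab
  have := M.invol b
  simp only [rematch, Set.mem_ofPred_eq, Set.mem_insert_iff, Set.mem_sdiff, Set.mem_singleton_iff]
  split_ifs <;> grind

variable [Finite A]

theorem msize_rematch_of_m_eq_self (hb : M.m b = b) :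
    msize I (M.rematch a b ha hab) = msize I M + 2 := by
  have hab' := I.ne_of_acc hab
  rw [msize, matched_rematch, Set.sdiff_singleton_eq_self (by simp [hb]),
    Set.ncard_insert_of_notMem (by simp [hab', ha]), Set.ncard_insert_of_notMem (by simp [hb])]
  rfl

theorem msize_rematch_of_m_ne_self (hb : M.m b ≠ b) :
    msize I (M.rematch a b ha hab) = msize I M := by
  have hpartner : M.m b ∈ {x | M.m x ≠ x} := by simpa [M.invol] using hb.symm
  have ha_not_mem : a ∉ {x | M.m x ≠ x} \ {M.m b} := fun h => h.1 ha
  have hb_mem : b ∈ {x | M.m x ≠ x} \ {M.m b} := ⟨hb, fun h => hb h.symm⟩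
  rw [msize, matched_rematch, Set.insert_eq_of_mem hb_mem,
    Set.ncard_insert_of_notMem ha_not_mem, Set.ncard_sdiff_singleton_add_one hpartner]
  rfl

end rematch

end Matching

theorem blocks.symm {M : Matching I} {a b : A} (h : blocks I M a b) : blocks I M b a :=
  ⟨I.acc_symm a b h.1, h.2.2, h.2.1⟩

theorem not_blocks_of_forall_not_pref {M : Matching I} {x : A} (hx : M.m x ≠ x)
    (htop : ∀ w, ¬ I.pref x w (M.m x)) (y : A) : ¬ blocks I M x y :=
  fun h => h.2.1.elim hx (htop y)

theorem m_eq_self_of_blocks_of_blocks [Finite A] {M : Matching I} {a b c : A}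
    (hdeg : {x | I.acc a x}.ncard ≤ 2) (hb : blocks I M a b) (hc : blocks I M a c) (hbc : b ≠ c) :
    M.m a = a := by
  by_contra h
  rcases I.eq_or_eq_of_acc hdeg hb.1 hc.1 (M.acc_matched a h) hbc with h' | h'
  · exact I.pref_irrefl a b (h' ▸ hb.2.1.resolve_left h)
  · exact I.pref_irrefl a c (h' ▸ hc.2.1.resolve_left h)

namespace MaxCard

variable [Finite A] {M : Matching I} (hM : MaxCard I M) {a b : A} (ha : M.m a = a)
  (hab : I.acc a b)
include hM ha hab

theorem m_ne_self_of_acc : M.m b ≠ b := by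
  intro hb
  have := hM (M.rematch a b ha hab)
  rw [M.msize_rematch_of_m_eq_self ha hab hb] at this
  omega

theorem rematch (hb : M.m b ≠ b) : MaxCard I (M.rematch a b ha hab) :=
  fun M' => (M.msize_rematch_of_m_ne_self ha hab hb).symm ▸ hM M'

end MaxCard

def blockingPairs (I : SRI A) (M : Matching I) : Set (Sym2 A) :=
  {p | ∃ a b, p = s(a, b) ∧ blocks I M a b}

theorem totalBP_eq_ncard_blockingPairs (M : Matching I) :
    totalBP I M = (blockingPairs I M).ncard := rfl

section blockingPairs_rematch

variable [Finite A] (hdeg : ∀ a, {b | I.acc a b}.ncard ≤ 2) {M : Matching I} {a b c : A}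
  (ha : M.m a = a) (hb : blocks I M a b) (hpref : I.pref a b c) (hmb : M.m b ≠ b)
include hdeg ha hb hpref hmb

theorem blockingPairs_rematch_subset :
    blockingPairs I (M.rematch a b ha hb.1) ⊆ (blockingPairs I M \ {s(a, b), s(a, c)}) ∪
      (fun y => s(M.m b, y)) '' ({y | I.acc (M.m b) y} \ {b}) := by
  have hab := I.ne_of_acc hb.1
  have top_a : ∀ y, ¬ blocks I (M.rematch a b ha hb.1) a y :=
    not_blocks_of_forall_not_pref (by simpa using hab.symm)
      (by simpa using I.not_pref_of_pref (hdeg a) hpref)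
  have top_b : ∀ y, ¬ blocks I (M.rematch a b ha hb.1) b y :=
    not_blocks_of_forall_not_pref (by simpa using hab)
      (by simpa using I.not_pref_of_pref (hdeg b) (hb.2.2.resolve_left hmb))
  rintro _ ⟨x, y, rfl, hxy⟩
  have hx : x ≠ a ∧ x ≠ b := ⟨fun h => top_a y (h ▸ hxy), fun h => top_b y (h ▸ hxy)⟩
  have hy : y ≠ a ∧ y ≠ b :=
    ⟨fun h => top_a x (h ▸ hxy.symm), fun h => top_b x (h ▸ hxy.symm)⟩
  by_cases hxb' : x = M.m b
  · exact Or.inr ⟨y, ⟨hxb' ▸ hxy.1, hy.2⟩, by rw [hxb']⟩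
  by_cases hyb' : y = M.m b
  · exact Or.inr ⟨x, ⟨hyb' ▸ hxy.symm.1, hx.2⟩, by rw [hyb', Sym2.eq_swap]⟩
  refine Or.inl ⟨⟨x, y, rfl, ?_⟩, ?_⟩
  · rwa [blocks, M.rematch_m_of_ne ha hb.1 hx.1 hx.2 hxb',
      M.rematch_m_of_ne ha hb.1 hy.1 hy.2 hyb'] at hxy
  · simp [hx.1, hy.1]

theorem totalBP_rematch_lt (hc : blocks I M a c) :
    totalBP I (M.rematch a b ha hb.1) < totalBP I M := by
  have hbc : s(a, b) ≠ s(a, c) := by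
    refine mt Sym2.congr_right.1 ?_
    rintro rfl
    exact I.pref_irrefl a b hpref
  have hpair : {s(a, b), s(a, c)} ⊆ blockingPairs I M := by
    rintro _ (rfl | rfl)
    exacts [⟨a, b, rfl, hb⟩, ⟨a, c, rfl, hc⟩]
  have htwo := Set.ncard_le_ncard hpair
  rw [Set.ncard_pair hbc] at htwo
  have hnew : ((fun y => s(M.m b, y)) '' ({y | I.acc (M.m b) y} \ {b})).ncard ≤ 1 := by
    have hbb' : b ∈ {y | I.acc (M.m b) y} := I.acc_symm b _ (M.acc_matched b hmb)
    have := hdeg (M.m b)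
    grw [Set.ncard_image_le, Set.ncard_sdiff_singleton_of_mem hbb']
    omega
  calc totalBP I (M.rematch a b ha hb.1)
      ≤ (blockingPairs I M \ {s(a, b), s(a, c)}).ncard + 1 := by
        grw [totalBP_eq_ncard_blockingPairs,
          Set.ncard_le_ncard (blockingPairs_rematch_subset hdeg ha hb hpref hmb) (Set.toFinite _),
          Set.ncard_union_le, hnew]
    _ < totalBP I M := by
        rw [Set.ncard_sdiff hpair, Set.ncard_pair hbc, totalBP_eq_ncard_blockingPairs]
        omega

end blockingPairs_rematch

theorem MaxCard.exists_totalBP_lt [Finite A] (hdeg : ∀ a, {b | I.acc a b}.ncard ≤ 2)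
    {M : Matching I} (hM : MaxCard I M) {a b c : A} (hb : blocks I M a b) (hc : blocks I M a c)
    (hbc : b ≠ c) : ∃ N : Matching I, MaxCard I N ∧ totalBP I N < totalBP I M := by
  wlog hpref : I.pref a b c generalizing b c
  · exact this hc hb hbc.symm ((I.pref_total a b c hb.1 hc.1 hbc).resolve_left hpref)
  have ha := m_eq_self_of_blocks_of_blocks (hdeg a) hb hc hbc
  have hmb := hM.m_ne_self_of_acc ha hb.1
  exact ⟨_, hM.rematch ha hb.1 hmb, totalBP_rematch_lt hdeg ha hb hpref hmb hc⟩

theorem stmt9_general (A : Type) [Fintype A] (I : SRI A)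
    (hdeg : ∀ a, {b | I.acc a b}.ncard ≤ 2) :
    ∃ M : Matching I, MaxCard I M ∧ ∀ a, bpa I M a ≤ 1 := by
  obtain ⟨M₀, hM₀⟩ := Finite.exists_max (msize I)
  obtain ⟨M, hM, hmin⟩ :=
    Set.exists_min_image {M | MaxCard I M} (totalBP I) (Set.toFinite _) ⟨M₀, hM₀⟩
  refine ⟨M, hM, fun a => (Set.ncard_le_one (Set.toFinite _)).2 fun b hb c hc => ?_⟩
  by_contra hbc
  obtain ⟨N, hN, hlt⟩ := hM.exists_totalBP_lt hdeg hb hc hbc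
  exact (hmin N hN).not_gt hlt

/-- If every preference list of a bipartite (SMI) instance has length at most 2,
then there is a maximum-cardinality matching in which no agent is in more than
one blocking pair. -/
theorem stmt9 (A : Type) [Fintype A] (I : SRI A) (side : A → Bool)
    (hbip : Bip I side)
    (hdeg : ∀ a, {b | I.acc a b}.ncard ≤ 2) :
    ∃ M : Matching I, MaxCard I M ∧ ∀ a, bpa I M a ≤ 1 :=
  stmt9_general A I hdeg
end
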